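/- In every outside-obstacle representation (f, C) of a finite simple graph G, for every clique Z of G the convex hull of the point set f(Z) is disjoint from the obstacle C. -/

import Mathlib

noncomputable section

/-- The plane ℝ². -/
abbrev Plane : Type := EuclideanSpace ℝ (Fin 2)

/-- A point set is in general position if no three of its points are collinear. -/
def InGenPos (P : Set Plane) : Prop :=
  ∀ p ∈ P, ∀ q ∈ P, ∀ r ∈ P, p ≠ q → p ≠ r → q ≠ r →
    ¬ Collinear ℝ ({p, q, r} : Set Plane)

/-- The union of the closed segments corresponding to the edges of `G`
in the straight-line drawing given by `f`. -/
def edgeUnion {V : Type} (G : SimpleGraph V) (f : V → Plane) : Set Plane :=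
  ⋃ (u : V) (v : V) (_ : G.Adj u v), segment ℝ (f u) (f v)

/-- The unbounded connected component of the complement of the drawing. -/
def outsideRegion {V : Type} (G : SimpleGraph V) (f : V → Plane) : Set Plane :=
  {p | p ∈ (edgeUnion G f)ᶜ ∧
       ¬ Bornology.IsBounded (connectedComponentIn (edgeUnion G f)ᶜ p)}

/-- `(f, C)` is a single-obstacle representation of `G`. -/
def IsObstacleRep {V : Type} (G : SimpleGraph V) (f : V → Plane) (C : Set Plane) : Prop :=
  Function.Injective f ∧ InGenPos (Set.range f) ∧
  IsOpen C ∧ IsConnected C ∧ Disjoint C (Set.range f) ∧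
  ∀ u v : V, u ≠ v → (G.Adj u v ↔ Disjoint (segment ℝ (f u) (f v)) C)

/-- An outside-obstacle representation: the obstacle lies in the unbounded component. -/
def IsOutsideObstacleRep {V : Type} (G : SimpleGraph V) (f : V → Plane) (C : Set Plane) : Prop :=
  IsObstacleRep G f C ∧ C ⊆ outsideRegion G f

/-- An inside-obstacle representation: the obstacle avoids the unbounded component. -/
def IsInsideObstacleRep {V : Type} (G : SimpleGraph V) (f : V → Plane) (C : Set Plane) : Prop :=
  IsObstacleRep G f C ∧ Disjoint C (outsideRegion G f)

/-- An exposed outside-obstacle representation: every vertex lies on the boundary of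
the unbounded component. -/
def IsExposedOutsideObstacleRep {V : Type} (G : SimpleGraph V) (f : V → Plane)
    (C : Set Plane) : Prop :=
  IsOutsideObstacleRep G f C ∧ ∀ v : V, f v ∈ closure (outsideRegion G f)

/-- `p` is an extreme point ("on the convex hull") of the point set `P`. -/
def IsExtremePt (p : Plane) (P : Set Plane) : Prop :=
  p ∉ convexHull ℝ (P \ {p})

/-- `S` has at least `n` connected components. -/
def AtLeastNComponents (S : Set Plane) (n : ℕ) : Prop :=
  ∃ p : Fin n → Plane, (∀ i, p i ∈ S) ∧
    ∀ i j : Fin n, i ≠ j →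
      connectedComponentIn S (p i) ≠ connectedComponentIn S (p j)

/-- `S` has exactly `n` connected components. -/
def ExactlyNComponents (S : Set Plane) (n : ℕ) : Prop :=
  ∃ p : Fin n → Plane, (∀ i, p i ∈ S) ∧
    (∀ i j : Fin n, i ≠ j →
      connectedComponentIn S (p i) ≠ connectedComponentIn S (p j)) ∧
    ∀ q ∈ S, ∃ i : Fin n, connectedComponentIn S q = connectedComponentIn S (p i)

/-- The convex hulls of `A` and `B` are at least `t`-crossing. -/
def AtLeastCrossing (A B : Set Plane) (t : ℕ) : Prop :=
  ((convexHull ℝ A) ∩ (convexHull ℝ B)).Nonempty ∧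
    AtLeastNComponents ((convexHull ℝ A) \ (convexHull ℝ B)) (t + 1)

/-- The convex hulls of `A` and `B` are exactly `t`-crossing. -/
def ExactlyCrossing (A B : Set Plane) (t : ℕ) : Prop :=
  ((convexHull ℝ A) ∩ (convexHull ℝ B)).Nonempty ∧
    ExactlyNComponents ((convexHull ℝ A) \ (convexHull ℝ B)) (t + 1)

/-!
By Carathéodory, a point `c` of the obstacle lying in the convex hull of a clique lies in the hull
`T` of at most three affinely independent points of the clique. If `T` is a single point, `c` is a
vertex, which the obstacle avoids. Otherwise the frontier of the segment or triangle `T` is covered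
by edges of the clique, so the component of `c` in the complement of the drawing cannot leave `T`
and is bounded, although the obstacle lies in the unbounded component.
-/

theorem IsPreconnected.subset_of_disjoint_frontier {X : Type*} [TopologicalSpace X]
    {s t : Set X} (hs : IsPreconnected s) (hst : (s ∩ t).Nonempty)
    (hfr : Disjoint s (frontier t)) : s ⊆ t := by
  have hs_sub : s ⊆ interior t ∪ (closure t)ᶜ := fun x hx => by
    by_cases hxt : x ∈ closure t
    · exact .inl (by_contra fun hxi => hfr.notMem_of_mem_left hx ⟨hxt, hxi⟩)
    · exact .inr hxt
  obtain ⟨x, hxs, hxt⟩ := hst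
  have hx_int : x ∈ interior t :=
    (hs_sub hxs).resolve_right fun h => h (subset_closure hxt)
  refine (hs.subset_left_of_subset_union isOpen_interior isClosed_closure.isOpen_compl
    ?_ hs_sub ⟨x, hxs, hx_int⟩).trans interior_subset
  exact disjoint_compl_right.mono_right
    (Set.compl_subset_compl.2 (interior_subset.trans subset_closure))

theorem AffineBasis.frontier_convexHull_subset {ι E : Type*} [Fintype ι] [NormedAddCommGroup E]
    [NormedSpace ℝ E] (b : AffineBasis ι ℝ E) :
    frontier (convexHull ℝ (Set.range b)) ⊆ ⋃ i, convexHull ℝ (b '' {i}ᶜ) := by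
  classical
  intro x ⟨hx_cl, hx_int⟩
  rw [((Set.finite_range b).isClosed_convexHull (𝕜 := ℝ)).closure_eq,
    b.convexHull_eq_nonneg_coord] at hx_cl
  rw [b.interior_convexHull] at hx_int
  obtain ⟨i, hi⟩ : ∃ i, b.coord i x ≤ 0 := by simpa using hx_int
  have hxi : b.coord i x = 0 := le_antisymm hi (hx_cl i)
  refine Set.mem_iUnion.2 ⟨i, ?_⟩
  have hx : ∑ j ∈ Finset.univ.erase i, b.coord j x • b j = x := by
    rw [Finset.sum_erase _ (by rw [hxi, zero_smul])]
    exact b.linear_combination_coord_eq_self x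
  rw [← hx]
  refine (convex_convexHull ℝ _).sum_mem (fun j _ => hx_cl j) ?_ fun j hj =>
    subset_convexHull ℝ _ ⟨j, Finset.ne_of_mem_erase hj, rfl⟩
  rw [Finset.sum_erase (f := fun j => b.coord j x) _ hxi]
  exact b.sum_coord_apply_eq_one x

theorem AffineIndependent.exists_mem_segment_of_mem_frontier_convexHull {E : Type*}
    [NormedAddCommGroup E] [NormedSpace ℝ E] (hE : Module.finrank ℝ E = 2) {t : Finset E}
    (ht : AffineIndependent ℝ ((↑) : t → E)) (ht2 : 2 ≤ t.card) {x : E}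
    (hx : x ∈ frontier (convexHull ℝ (t : Set E))) :
    ∃ p ∈ t, ∃ q ∈ t, p ≠ q ∧ x ∈ segment ℝ p q := by
  classical
  suffices ∃ s ⊆ t, s.card = 2 ∧ x ∈ convexHull ℝ (s : Set E) by
    obtain ⟨s, hst, hs2, hxs⟩ := this
    obtain ⟨p, q, hpq, rfl⟩ := Finset.card_eq_two.1 hs2
    rw [Finset.coe_pair, convexHull_pair] at hxs
    exact ⟨p, hst (by simp), q, hst (by simp), hpq, hxs⟩
  have : FiniteDimensional ℝ E := Module.finite_of_finrank_eq_succ hE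
  have ht3 : t.card ≤ 3 := by
    simpa [hE] using ht.card_le_finrank_succ.trans (Nat.succ_le_succ (Submodule.finrank_le _))
  obtain h2 | h3 : t.card = 2 ∨ t.card = 3 := by omega
  · refine ⟨t, subset_rfl, h2, ?_⟩
    rw [← (t.finite_toSet.isClosed_convexHull (𝕜 := ℝ)).closure_eq]
    exact frontier_subset_closure hx
  · let b : AffineBasis t ℝ E :=
      ⟨(↑), ht, ht.affineSpan_eq_top_iff_card_eq_finrank_add_one.2 (by simp [hE, h3])⟩
    rw [← Subtype.range_coe (s := (t : Set E))] at hx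
    obtain ⟨i, hi⟩ := Set.mem_iUnion.1 (b.frontier_convexHull_subset hx)
    refine ⟨t.erase i, Finset.erase_subset _ _, by rw [Finset.card_erase_of_mem i.2, h3], ?_⟩
    rw [show ⇑b = ((↑) : t → E) from rfl] at hi
    convert hi using 2
    rw [Finset.coe_erase, Set.image_compl_eq_range_sdiff_image Subtype.val_injective,
      Set.image_singleton, Subtype.range_coe]

theorem segment_subset_edgeUnion {V : Type} {G : SimpleGraph V} (f : V → Plane) {u v : V}
    (huv : G.Adj u v) : segment ℝ (f u) (f v) ⊆ edgeUnion G f :=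
  fun _ hx => Set.mem_iUnion₂.2 ⟨u, v, Set.mem_iUnion.2 ⟨huv, hx⟩⟩

theorem frontier_convexHull_subset_edgeUnion {V : Type} {G : SimpleGraph V} (f : V → Plane)
    {Z : Set V} (hZ : Z.Pairwise G.Adj) {t : Finset Plane} (htZ : (t : Set Plane) ⊆ f '' Z)
    (ht : AffineIndependent ℝ ((↑) : t → Plane)) (ht2 : 2 ≤ t.card) :
    frontier (convexHull ℝ (t : Set Plane)) ⊆ edgeUnion G f := by
  intro x hx
  obtain ⟨p, hp, q, hq, hpq, hx⟩ :=
    ht.exists_mem_segment_of_mem_frontier_convexHull finrank_euclideanSpace_fin ht2 hx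
  obtain ⟨u, hu, rfl⟩ := htZ hp
  obtain ⟨v, hv, rfl⟩ := htZ hq
  exact segment_subset_edgeUnion f (hZ hu hv (ne_of_apply_ne f hpq)) hx

theorem clique_convexHull_disjoint_obstacle_general
    {V : Type} (G : SimpleGraph V) (f : V → Plane) (C : Set Plane)
    (hrep : IsOutsideObstacleRep G f C) (Z : Set V) (hZ : Z.Pairwise G.Adj) :
    Disjoint (convexHull ℝ (f '' Z)) C := by
  obtain ⟨⟨-, -, -, -, hC_vertices, -⟩, hC_outside⟩ := hrep
  refine Set.disjoint_right.2 fun c hcC hcZ => ?_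
  obtain ⟨hc_drawing, hc_unbounded⟩ := hC_outside hcC
  obtain ⟨t, htZ, ht, hct⟩ : ∃ t : Finset Plane, (t : Set Plane) ⊆ f '' Z ∧
      AffineIndependent ℝ ((↑) : t → Plane) ∧ c ∈ convexHull ℝ (t : Set Plane) := by
    rw [convexHull_eq_union] at hcZ
    simpa only [Set.mem_iUnion, exists_prop] using hcZ
  obtain ht1 | ht2 := lt_or_ge t.card 2
  · have ht0 : 0 < t.card := Finset.card_pos.2 (convexHull_nonempty_iff.1 ⟨c, hct⟩)
    obtain ⟨p, rfl⟩ := Finset.card_eq_one.1 (by omega : t.card = 1)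
    rw [Finset.coe_singleton, convexHull_singleton, Set.mem_singleton_iff] at hct
    obtain ⟨v, -, rfl⟩ := htZ (Finset.mem_singleton_self p)
    exact hC_vertices.notMem_of_mem_left hcC ⟨v, hct.symm⟩
  · refine hc_unbounded ((t.finite_toSet.isCompact_convexHull (𝕜 := ℝ)).isBounded.subset ?_)
    refine isPreconnected_connectedComponentIn.subset_of_disjoint_frontier
      ⟨c, mem_connectedComponentIn hc_drawing, hct⟩ ?_
    exact disjoint_compl_left.mono (connectedComponentIn_subset _ _)
      (frontier_convexHull_subset_edgeUnion f hZ htZ ht ht2)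

/-- In every outside-obstacle representation of a finite simple graph,
the convex hull of the point set of any clique is disjoint from the obstacle. -/
theorem clique_convexHull_disjoint_obstacle
    {V : Type} [Fintype V] (G : SimpleGraph V) (f : V → Plane) (C : Set Plane)
    (hrep : IsOutsideObstacleRep G f C) (Z : Set V) (hZ : Z.Pairwise G.Adj) :
    Disjoint (convexHull ℝ (f '' Z)) C :=
  clique_convexHull_disjoint_obstacle_general G f C hrep Z hZ

end
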